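/- Reverse-direction symmetrization inequality: E_{z ∼ μ^{⊗N}}[ sup_{g ∈ ι} ( L_N(g)(z) − L(g) ) ] ≤ 2·C(N). -/

import Mathlib

open MeasureTheory

noncomputable section

variable {Z : Type*} [MeasurableSpace Z] {ι : Type*}

/-- The empirical loss of hypothesis `g` on the sample `z` of size `N`:
`L_N(g)(z) = (1/N) ∑ᵢ f g (z i)`. -/
def empLoss (f : ι → Z → ℝ) (N : ℕ) (g : ι) (z : Fin N → Z) : ℝ :=
  (1 / N) * ∑ i, f g (z i)

/-- The expected loss of hypothesis `g`: `L(g) = ∫ f g dμ`. -/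
def expLoss (μ : Measure Z) (f : ι → Z → ℝ) (g : ι) : ℝ :=
  ∫ x, f g x ∂μ

/-- A Rademacher sign `±1` encoded by a Boolean. -/
def rsign (b : Bool) : ℝ := if b then 1 else -1

/-- The fair-coin measure on `Bool`, i.e. the distribution of one Rademacher sign. -/
def coinFlip : Measure Bool := (PMF.uniformOfFintype Bool).toMeasure

/-- The Rademacher complexity of the class `ι` (composed with the loss `f`) with `N` samples:
`C(N) = E_{z ~ μ^N, ξ ~ Unif{±1}^N} [ sup_{g ∈ ι} (1/N) ∑ᵢ ξᵢ f g (zᵢ) ]`. -/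
def radComplexity (μ : Measure Z) (f : ι → Z → ℝ) (N : ℕ) : ℝ :=
  ∫ p : (Fin N → Z) × (Fin N → Bool),
    ⨆ g : ι, (1 / N) * ∑ i, rsign (p.2 i) * f g (p.1 i)
    ∂((Measure.pi fun _ => μ).prod (Measure.pi fun _ => coinFlip))

/-!
Since `L(g)` is the mean of `L_N(g)`, Jensen's inequality for the supremum lets us replace `L(g)`
by the empirical loss of an independent ghost sample `z'`. Exchanging `zᵢ` and `z'ᵢ` on any set of
indices preserves the law of `(z, z')`, so the difference `L_N(g)(z) - L_N(g)(z')` may be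
multiplied coordinatewise by arbitrary signs `ξᵢ`; averaging over uniform signs and splitting the
supremum of the resulting sum produces two Rademacher suprema, one in `z` with signs `ξ` and one
in `z'` with signs `-ξ`, each of expectation `C(N)`.
-/

lemma MeasureTheory.MeasurePreserving.integral_comp_of_measurable {α β : Type*}
    [MeasurableSpace α] [MeasurableSpace β] {μ : Measure α} {ν : Measure β} {e : α → β}
    (he : MeasurePreserving e μ ν) {F : β → ℝ} (hF : Measurable F) :
    ∫ x, F (e x) ∂μ = ∫ y, F y ∂ν := by
  rw [← he.map_eq, integral_map he.measurable.aemeasurable hF.aestronglyMeasurable]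

lemma abs_one_div_mul_sum_le {n : ℕ} {a : Fin n → ℝ} {C : ℝ} (hC : 0 ≤ C)
    (ha : ∀ i, |a i| ≤ C) : |1 / (n : ℝ) * ∑ i, a i| ≤ C := by
  rw [abs_mul, abs_of_nonneg (by positivity)]
  calc 1 / (n : ℝ) * |∑ i, a i| ≤ 1 / n * (n * C) := by
        gcongr
        calc |∑ i, a i| ≤ ∑ i, |a i| := Finset.abs_sum_le_sum_abs _ _
          _ ≤ ∑ _i : Fin n, C := Finset.sum_le_sum fun i _ => ha i
          _ = n * C := by simp
    _ ≤ C := by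
        rcases eq_or_ne n 0 with rfl | hn
        · simpa using hC
        · rw [← mul_assoc, one_div_mul_cancel (Nat.cast_ne_zero.2 hn), one_mul]

lemma abs_iSup_le_of_forall_abs_le {κ : Type*} [Nonempty κ] {F : κ → ℝ} {C : ℝ}
    (hF : ∀ g, |F g| ≤ C) : |⨆ g, F g| ≤ C := by
  have hbdd : BddAbove (Set.range F) :=
    ⟨C, Set.forall_mem_range.2 fun g => le_of_abs_le (hF g)⟩
  obtain ⟨g⟩ := ‹Nonempty κ›
  exact abs_le.2 ⟨(neg_le_of_abs_le (hF g)).trans (le_ciSup hbdd g),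
    ciSup_le fun g => le_of_abs_le (hF g)⟩

lemma integrable_iSup_of_abs_le {α κ : Type*} [MeasurableSpace α] {m : Measure α}
    [IsFiniteMeasure m] [Countable κ] [Nonempty κ] {F : κ → α → ℝ} {C : ℝ}
    (hF : ∀ g, Measurable (F g)) (hC : ∀ g x, |F g x| ≤ C) :
    Integrable (fun x => ⨆ g, F g x) m :=
  Integrable.of_bound (Measurable.iSup hF).aestronglyMeasurable C
    (ae_of_all _ fun x => abs_iSup_le_of_forall_abs_le fun g => hC g x)

/-- Jensen's inequality for the convex functional `sup`, in the form "replace each mean by a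
ghost sample". -/
lemma integral_iSup_sub_integral_le {α κ : Type*} [MeasurableSpace α] {ν : Measure α}
    [IsProbabilityMeasure ν] [Countable κ] [Nonempty κ] {F : κ → α → ℝ} {C : ℝ}
    (hF : ∀ g, Measurable (F g)) (hC : ∀ g x, |F g x| ≤ C) :
    ∫ x, ⨆ g, (F g x - ∫ y, F g y ∂ν) ∂ν ≤ ∫ p, ⨆ g, (F g p.1 - F g p.2) ∂ν.prod ν := by
  have hint : ∀ g, Integrable (F g) ν := fun g =>
    Integrable.of_bound (hF g).aestronglyMeasurable C (ae_of_all _ (hC g))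
  have hdiff : ∀ g x y, |F g x - F g y| ≤ C + C := fun g x y =>
    (abs_sub _ _).trans (add_le_add (hC g x) (hC g y))
  have hghost : Integrable (fun p : α × α => ⨆ g, (F g p.1 - F g p.2)) (ν.prod ν) :=
    integrable_iSup_of_abs_le (fun g => by fun_prop) fun g p => hdiff g p.1 p.2
  have hmean : ∀ g, |∫ y, F g y ∂ν| ≤ C := fun g => by
    simpa using norm_integral_le_of_norm_le_const (μ := ν) (f := F g) (ae_of_all _ (hC g))
  rw [integral_prod _ hghost]
  refine integral_mono (integrable_iSup_of_abs_le (fun g => by fun_prop)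
    fun g x => (abs_sub _ _).trans (add_le_add (hC g x) (hmean g)))
    hghost.integral_prod_left fun x => ciSup_le fun g => ?_
  have hbdd : ∀ y, BddAbove (Set.range fun g => F g x - F g y) := fun y =>
    ⟨C + C, Set.forall_mem_range.2 fun g => le_of_abs_le (hdiff g x y)⟩
  calc F g x - ∫ y, F g y ∂ν = ∫ y, (F g x - F g y) ∂ν := by
        rw [integral_sub (integrable_const _) (hint g), integral_const]; simp
    _ ≤ ∫ y, ⨆ g, (F g x - F g y) ∂ν :=
        integral_mono ((integrable_const _).sub (hint g))
          (integrable_iSup_of_abs_le (fun g => by fun_prop) fun g y => hdiff g x y)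
          fun y => le_ciSup (hbdd y) g

def condSwap {α κ : Type*} (b : κ → Bool) (p : (κ → α) × (κ → α)) : (κ → α) × (κ → α) :=
  (fun i => if b i then p.1 i else p.2 i, fun i => if b i then p.2 i else p.1 i)

lemma measurePreserving_condSwap {α κ : Type*} [MeasurableSpace α] [Fintype κ]
    (μ : Measure α) [SigmaFinite μ] (b : κ → Bool) :
    MeasurePreserving (condSwap b) ((Measure.pi fun _ : κ => μ).prod (Measure.pi fun _ => μ))
      ((Measure.pi fun _ : κ => μ).prod (Measure.pi fun _ => μ)) := by
  let e := MeasurableEquiv.arrowProdEquivProdArrow α α κ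
  have he : MeasurePreserving e (Measure.pi fun _ : κ => μ.prod μ)
      ((Measure.pi fun _ : κ => μ).prod (Measure.pi fun _ => μ)) :=
    measurePreserving_arrowProdEquivProdArrow α α κ _ _
  have hswap : MeasurePreserving (fun (q : κ → α × α) i => if b i then q i else (q i).swap)
      (Measure.pi fun _ : κ => μ.prod μ) (Measure.pi fun _ : κ => μ.prod μ) :=
    measurePreserving_pi _ _ (f := fun i (x : α × α) => if b i then x else x.swap) fun i => by
      cases b i
      · exact Measure.measurePreserving_swap
      · exact MeasurePreserving.id _
  have hcomp : condSwap b = e ∘ (fun q i => if b i then q i else (q i).swap) ∘ e.symm := by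
    funext p
    ext i <;> by_cases hb : b i <;>
      simp [condSwap, e, hb, MeasurableEquiv.arrowProdEquivProdArrow, Equiv.arrowProdEquivProdArrow]
  rw [hcomp]
  exact he.comp (hswap.comp he.symm)

instance : IsProbabilityMeasure coinFlip := PMF.toMeasure.isProbabilityMeasure _

@[fun_prop]
lemma measurable_rsign : Measurable rsign := measurable_from_top

lemma abs_rsign (b : Bool) : |rsign b| = 1 := by
  cases b <;> simp [rsign]

lemma rsign_not (b : Bool) : rsign (!b) = -rsign b := by
  cases b <;> simp [rsign]

lemma measurePreserving_not_coinFlip : MeasurePreserving Bool.not coinFlip coinFlip := by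
  refine ⟨by fun_prop, ?_⟩
  rw [coinFlip, PMF.toMeasure_map _ _ (by fun_prop)]
  congr 1
  ext b
  cases b <;> simp [PMF.map_apply]

lemma integral_comp_not_pi_coinFlip {κ : Type*} [Fintype κ] (G : (κ → Bool) → ℝ) :
    ∫ ξ, G (fun i => !ξ i) ∂(Measure.pi fun _ => coinFlip) =
      ∫ ξ, G ξ ∂(Measure.pi fun _ => coinFlip) :=
  (measurePreserving_pi _ _ fun _ => measurePreserving_not_coinFlip).integral_comp_of_measurable
    (measurable_of_countable G)

lemma measurable_empLoss {α : Type*} [MeasurableSpace α] {f : ι → α → ℝ}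
    (hf : ∀ g, Measurable (f g)) (N : ℕ) (g : ι) : Measurable (empLoss f N g) := by
  unfold empLoss; fun_prop

lemma abs_empLoss_le {α : Type*} {f : ι → α → ℝ} (hf : ∀ g x, |f g x| ≤ 1) {N : ℕ} (g : ι)
    (z : Fin N → α) : |empLoss f N g z| ≤ 1 :=
  abs_one_div_mul_sum_le zero_le_one fun i => hf g (z i)

lemma integral_empLoss {α : Type*} [MeasurableSpace α] (μ : Measure α) [IsProbabilityMeasure μ]
    {f : ι → α → ℝ} {N : ℕ} (hN : N ≠ 0) {g : ι} (hf : Integrable (f g) μ) :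
    ∫ z, empLoss f N g z ∂(Measure.pi fun _ : Fin N => μ) = expLoss μ f g := by
  simp only [empLoss]
  rw [integral_const_mul, integral_finsetSum _ fun i _ => integrable_comp_eval hf]
  simp only [integral_comp_eval (μ := fun _ : Fin N => μ) hf.aestronglyMeasurable,
    Finset.sum_const, Finset.card_univ, Fintype.card_fin, nsmul_eq_mul]
  rw [← mul_assoc, one_div_mul_cancel (Nat.cast_ne_zero.2 hN), one_mul, expLoss]

lemma integral_iSup_empLoss_sub_expLoss_le {α : Type*} [MeasurableSpace α] (μ : Measure α)
    [IsProbabilityMeasure μ] [Countable ι] [Nonempty ι] {f : ι → α → ℝ}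
    (hf : ∀ g, Measurable (f g)) (hb : ∀ g x, |f g x| ≤ 1) {N : ℕ} (hN : N ≠ 0) :
    ∫ z, ⨆ g, (empLoss f N g z - expLoss μ f g) ∂(Measure.pi fun _ : Fin N => μ) ≤
      ∫ p, ⨆ g, (empLoss f N g p.1 - empLoss f N g p.2)
        ∂(Measure.pi fun _ : Fin N => μ).prod (Measure.pi fun _ => μ) := by
  have hmean : ∀ g, ∫ z, empLoss f N g z ∂(Measure.pi fun _ : Fin N => μ) = expLoss μ f g :=
    fun g => integral_empLoss μ hN <|
      Integrable.of_bound (hf g).aestronglyMeasurable 1 (ae_of_all _ (hb g))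
  simpa only [hmean] using
    integral_iSup_sub_integral_le (ν := Measure.pi fun _ : Fin N => μ) (measurable_empLoss hf N)
      (abs_empLoss_le hb)

def rademacherAvg {α : Type*} (f : ι → α → ℝ) (N : ℕ) (g : ι) (z : Fin N → α)
    (ξ : Fin N → Bool) : ℝ :=
  (1 / N) * ∑ i, rsign (ξ i) * f g (z i)

lemma measurable_rademacherAvg {α : Type*} [MeasurableSpace α] {f : ι → α → ℝ}
    (hf : ∀ g, Measurable (f g)) (N : ℕ) (g : ι) :
    Measurable fun p : (Fin N → α) × (Fin N → Bool) => rademacherAvg f N g p.1 p.2 := by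
  unfold rademacherAvg; fun_prop

lemma abs_rademacherAvg_le {α : Type*} {f : ι → α → ℝ} (hf : ∀ g x, |f g x| ≤ 1) {N : ℕ}
    (g : ι) (z : Fin N → α) (ξ : Fin N → Bool) : |rademacherAvg f N g z ξ| ≤ 1 :=
  abs_one_div_mul_sum_le zero_le_one fun i => by rw [abs_mul, abs_rsign, one_mul]; exact hf g (z i)

lemma radComplexity_eq_integral_integral {α : Type*} [MeasurableSpace α] (μ : Measure α)
    [IsProbabilityMeasure μ] [Countable ι] [Nonempty ι] {f : ι → α → ℝ}
    (hf : ∀ g, Measurable (f g)) (hb : ∀ g x, |f g x| ≤ 1) (N : ℕ) :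
    radComplexity μ f N = ∫ ξ, ∫ z, ⨆ g, rademacherAvg f N g z ξ
      ∂(Measure.pi fun _ : Fin N => μ) ∂(Measure.pi fun _ => coinFlip) :=
  integral_prod_symm _ (integrable_iSup_of_abs_le (measurable_rademacherAvg hf N)
    fun g p => abs_rademacherAvg_le hb g p.1 p.2)

lemma empLoss_condSwap_sub {α : Type*} {f : ι → α → ℝ} {N : ℕ} (g : ι) (b : Fin N → Bool)
    (p : (Fin N → α) × (Fin N → α)) :
    empLoss f N g (condSwap b p).1 - empLoss f N g (condSwap b p).2 =
      rademacherAvg f N g p.1 b + rademacherAvg f N g p.2 (fun i => !b i) := by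
  simp only [empLoss, rademacherAvg, condSwap, ← mul_sub, ← mul_add, ← Finset.sum_sub_distrib,
    ← Finset.sum_add_distrib, rsign_not]
  congr 1
  refine Finset.sum_congr rfl fun i _ => ?_
  cases b i <;> simp [rsign] <;> ring

lemma iSup_empLoss_condSwap_sub_le {α : Type*} [Nonempty ι] {f : ι → α → ℝ}
    (hb : ∀ g x, |f g x| ≤ 1) {N : ℕ} (b : Fin N → Bool) (p : (Fin N → α) × (Fin N → α)) :
    ⨆ g, (empLoss f N g (condSwap b p).1 - empLoss f N g (condSwap b p).2) ≤
      (⨆ g, rademacherAvg f N g p.1 b) + ⨆ g, rademacherAvg f N g p.2 (fun i => !b i) := by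
  have hbdd : ∀ z ξ, BddAbove (Set.range fun g => rademacherAvg f N g z ξ) := fun z ξ =>
    ⟨1, Set.forall_mem_range.2 fun g => le_of_abs_le (abs_rademacherAvg_le hb g z ξ)⟩
  simp only [empLoss_condSwap_sub]
  exact ciSup_le fun g => add_le_add (le_ciSup (hbdd _ _) g) (le_ciSup (hbdd _ _) g)

lemma integral_iSup_empLoss_sub_empLoss_le {α : Type*} [MeasurableSpace α] (μ : Measure α)
    [IsProbabilityMeasure μ] [Countable ι] [Nonempty ι] {f : ι → α → ℝ}
    (hf : ∀ g, Measurable (f g)) (hb : ∀ g x, |f g x| ≤ 1) {N : ℕ} (b : Fin N → Bool) :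
    ∫ p, ⨆ g, (empLoss f N g p.1 - empLoss f N g p.2)
        ∂(Measure.pi fun _ : Fin N => μ).prod (Measure.pi fun _ => μ) ≤
      ∫ z, ⨆ g, rademacherAvg f N g z b ∂(Measure.pi fun _ => μ) +
        ∫ z, ⨆ g, rademacherAvg f N g z (fun i => !b i) ∂(Measure.pi fun _ => μ) := by
  set P := Measure.pi fun _ : Fin N => μ
  set Φ : (Fin N → α) × (Fin N → α) → ℝ := fun p => ⨆ g, (empLoss f N g p.1 - empLoss f N g p.2)
  have hΦ : ∀ g, Measurable fun p : (Fin N → α) × (Fin N → α) =>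
      empLoss f N g p.1 - empLoss f N g p.2 := fun g =>
    ((measurable_empLoss hf N g).comp measurable_fst).sub
      ((measurable_empLoss hf N g).comp measurable_snd)
  have hΦint : Integrable Φ (P.prod P) := integrable_iSup_of_abs_le hΦ fun g p =>
    (abs_sub _ _).trans (add_le_add (abs_empLoss_le hb g p.1) (abs_empLoss_le hb g p.2))
  have hR : ∀ ξ : Fin N → Bool, Integrable (fun z => ⨆ g, rademacherAvg f N g z ξ) P :=
    fun ξ => integrable_iSup_of_abs_le
      (fun g => (measurable_rademacherAvg hf N g).comp measurable_prodMk_right)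
      fun g z => abs_rademacherAvg_le hb g z ξ
  have hswap := measurePreserving_condSwap μ b
  calc ∫ p, Φ p ∂P.prod P = ∫ p, Φ (condSwap b p) ∂P.prod P :=
        (hswap.integral_comp_of_measurable (Measurable.iSup hΦ)).symm
    _ ≤ ∫ p, ((⨆ g, rademacherAvg f N g p.1 b) + ⨆ g, rademacherAvg f N g p.2 (fun i => !b i))
          ∂P.prod P :=
        integral_mono (hswap.integrable_comp_of_integrable hΦint)
          (((hR b).comp_fst P).add ((hR _).comp_snd P)) (iSup_empLoss_condSwap_sub_le hb b)
    _ = _ := by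
        rw [integral_add ((hR b).comp_fst P) ((hR _).comp_snd P),
          integral_fun_fst (fun z => ⨆ g, rademacherAvg f N g z b),
          integral_fun_snd (fun z => ⨆ g, rademacherAvg f N g z (fun i => !b i))]
        simp

/-- **Reverse-direction symmetrization inequality**:
`E_{z ~ μ^{⊗N}} [ sup_{g ∈ ι} (L_N(g)(z) - L(g)) ] ≤ 2 C(N)`. -/
theorem symmetrization_reverse
    (μ : Measure Z) [IsProbabilityMeasure μ] [Countable ι] [Nonempty ι]
    (f : ι → Z → ℝ) (hmeas : ∀ g, Measurable (f g))
    (hbound : ∀ g x, f g x ∈ Set.Icc (0 : ℝ) 1)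
    (N : ℕ) (hN : 0 < N) :
    (∫ z, (⨆ g : ι, empLoss f N g z - expLoss μ f g)
        ∂(Measure.pi fun _ : Fin N => μ))
      ≤ 2 * radComplexity μ f N := by
  have hf : ∀ g x, |f g x| ≤ 1 := fun g x =>
    abs_le.2 ⟨by linarith [(hbound g x).1], (hbound g x).2⟩
  set P := Measure.pi fun _ : Fin N => μ
  set R : (Fin N → Bool) → ℝ := fun ξ => ∫ z, ⨆ g, rademacherAvg f N g z ξ ∂P
  calc _ ≤ ∫ p, ⨆ g, (empLoss f N g p.1 - empLoss f N g p.2) ∂P.prod P :=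
        integral_iSup_empLoss_sub_expLoss_le μ hmeas hf hN.ne'
    _ ≤ ∫ ξ, (R ξ + R (fun i => !ξ i)) ∂(Measure.pi fun _ => coinFlip) := by
        simpa using integral_mono (μ := Measure.pi fun _ => coinFlip) (integrable_const _)
          Integrable.of_finite fun ξ => integral_iSup_empLoss_sub_empLoss_le μ hmeas hf ξ
    _ = 2 * radComplexity μ f N := by
        rw [integral_add Integrable.of_finite Integrable.of_finite, integral_comp_not_pi_coinFlip R,
          ← radComplexity_eq_integral_integral μ hmeas hf]
        ring
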